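/- Let (X̂, d̂) and (X, d) be metric spaces, π : X̂ → X a 1-Lipschitz map, and Γ : X̂ → X̂ an isometric involution such that d(π(x), π(y)) = min(d̂(x,y), d̂(Γx, y)) for all x, y ∈ X̂. Let γ : [0,1] → X̂ be a constant-speed geodesic (d̂(γ(s), γ(t)) = |s−t|·d̂(γ(0), γ(1)) for all s,t) and suppose that for some t₀ ∈ [0,1] the point γ(t₀) is a fixed point of Γ. Then π ∘ γ restricted to [0, t₀] is a constant-speed geodesic in X (after affine reparameterization to [0,1]), i.e. d(π(γ(s)), π(γ(t))) = |s−t|·d̂(γ(0), γ(1)) for all s, t ∈ [0, t₀]. -/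
import Mathlib


open Set

theorem stmt_4 {Xh X : Type*} [MetricSpace Xh] [MetricSpace X]
    (π : Xh → X) (Γ : Xh → Xh)
    (hπ : LipschitzWith 1 π)
    (hinv : ∀ x, Γ (Γ x) = x)
    (hiso : ∀ x y, dist (Γ x) (Γ y) = dist x y)
    (hd : ∀ x y, dist (π x) (π y) = min (dist x y) (dist (Γ x) y))
    (γ : ℝ → Xh)
    (hgeo : ∀ s ∈ Icc (0:ℝ) 1, ∀ t ∈ Icc (0:ℝ) 1,
      dist (γ s) (γ t) = |s - t| * dist (γ 0) (γ 1))
    (t₀ : ℝ) (ht₀ : t₀ ∈ Icc (0:ℝ) 1) (hfix : Γ (γ t₀) = γ t₀) :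
    ∀ s ∈ Icc (0:ℝ) t₀, ∀ t ∈ Icc (0:ℝ) t₀,
      dist (π (γ s)) (π (γ t)) = |s - t| * dist (γ 0) (γ 1) := by
  set D := dist (γ 0) (γ 1) with hD
  have hsub : ∀ s, s ∈ Icc (0:ℝ) t₀ → s ∈ Icc (0:ℝ) 1 :=
    fun s hs => ⟨hs.1, hs.2.trans ht₀.2⟩
  have key : ∀ s ∈ Icc (0:ℝ) t₀, dist (π (γ s)) (π (γ t₀)) = (t₀ - s) * D := by
    intro s hs
    have h1 : dist (Γ (γ s)) (γ t₀) = dist (γ s) (γ t₀) := by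
      conv_lhs => rw [← hfix]
      rw [hiso]
    rw [hd, h1, min_self, hgeo s (hsub s hs) t₀ (hsub t₀ ⟨ht₀.1, le_refl _⟩),
      abs_of_nonpos (by linarith [hs.2])]
    ring_nf
  -- main claim for s ≤ t
  have main : ∀ s ∈ Icc (0:ℝ) t₀, ∀ t ∈ Icc (0:ℝ) t₀, s ≤ t →
      dist (π (γ s)) (π (γ t)) = (t - s) * D := by
    intro s hs t ht hst
    have hub : dist (π (γ s)) (π (γ t)) ≤ (t - s) * D := by
      have := hπ.dist_le_mul (γ s) (γ t)
      rw [hgeo s (hsub s hs) t (hsub t ht), abs_of_nonpos (by linarith)] at this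
      simpa using this.trans_eq (by push_cast; ring)
    have hlb : (t - s) * D ≤ dist (π (γ s)) (π (γ t)) := by
      have htri := dist_triangle (π (γ s)) (π (γ t)) (π (γ t₀))
      rw [key s hs, key t ht] at htri
      linarith
    linarith
  intro s hs t ht
  rcases le_total s t with h | h
  · rw [main s hs t ht h, abs_of_nonpos (by linarith)]; ring
  · rw [dist_comm, main t ht s hs h, abs_of_nonneg (by linarith)]
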